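/- arXiv:1002.3345 — 4 statements merged into one kernel-verified Lean document; each statement's English description precedes it below -/
import Mathlib

section
/- The approximate-learning objective F_h(Ŝ) = |H \ V(Ŝ)|·(|X| - κ) + Σ_{h' ∈ V(Ŝ)} min(|X| - κ, Σ_{x ∈ X} I(h'(x) = h(x))) is submodular and monotone non-decreasing as a function of the finite set Ŝ of question-response pairs. -/
open scoped Classical

def Submodular {α : Type*} [DecidableEq α] (F : Finset α → ℝ) : Prop :=
  ∀ A B : Finset α, A ⊆ B → ∀ v ∉ B, F (insert v B) - F B ≤ F (insert v A) - F A

def MonotoneSet {α : Type*} (F : Finset α → ℝ) : Prop :=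
  ∀ A B : Finset α, A ⊆ B → F A ≤ F B

noncomputable def versionSpace {H Q R : Type*} [Fintype H]
    (q : Q → H → Finset R) (S : Finset (Q × R)) : Finset H :=
  Finset.univ.filter (fun h : H => ∀ p ∈ S, p.2 ∈ q p.1 h)

/-!
Split the objective over hypotheses: `h'` contributes `min (|X| - κ) (agreement of h' with h)`
while it lies in the version space and the constant `|X| - κ`, which is at least as large, once it
has been eliminated. Since `h' ∈ V(Ŝ)` means that `h'` is consistent with every pair of `Ŝ`, each
summand is of the form `S ↦ if (∀ v ∈ S, φ v) then a else b` with `a ≤ b`, which is monotone and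
submodular: adding `v` changes it only if all of `S` satisfies `φ` and `v` does not, and that
becomes rarer as `S` grows. Both properties are preserved by sums.
-/

theorem Submodular.sum {α ι : Type*} [DecidableEq α] (s : Finset ι) {F : ι → Finset α → ℝ}
    (hF : ∀ i ∈ s, Submodular (F i)) : Submodular fun S => ∑ i ∈ s, F i S := by
  intro A B hAB v hv
  simp only [← Finset.sum_sub_distrib]
  exact Finset.sum_le_sum fun i hi => hF i hi A B hAB v hv

theorem MonotoneSet.sum {α ι : Type*} (s : Finset ι) {F : ι → Finset α → ℝ}
    (hF : ∀ i ∈ s, MonotoneSet (F i)) : MonotoneSet fun S => ∑ i ∈ s, F i S :=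
  fun A B hAB => Finset.sum_le_sum fun i hi => hF i hi A B hAB

theorem submodular_ite_forall_mem {α : Type*} [DecidableEq α] (φ : α → Prop) [DecidablePred φ]
    {a b : ℝ} (hab : a ≤ b) :
    Submodular fun S : Finset α => if ∀ v ∈ S, φ v then a else b := by
  intro A B hAB v _
  simp only [Finset.forall_mem_insert]
  by_cases hB : ∀ w ∈ B, φ w
  · have hA : ∀ w ∈ A, φ w := fun w hw => hB w (hAB hw)
    rw [if_pos hB, if_pos hA]
    by_cases hv : φ v
    · rw [if_pos ⟨hv, hB⟩, if_pos ⟨hv, hA⟩]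
    · rw [if_neg (hv ·.1), if_neg (hv ·.1)]
  · rw [if_neg hB, if_neg (hB ·.2), sub_self, sub_nonneg]
    by_cases hA : ∀ w ∈ A, φ w
    · rw [if_pos hA]
      split_ifs
      exacts [le_rfl, hab]
    · rw [if_neg hA, if_neg (hA ·.2)]

theorem monotoneSet_ite_forall_mem {α : Type*} (φ : α → Prop) [DecidablePred φ] {a b : ℝ}
    (hab : a ≤ b) : MonotoneSet fun S : Finset α => if ∀ v ∈ S, φ v then a else b := by
  intro A B hAB
  beta_reduce
  by_cases hB : ∀ w ∈ B, φ w
  · rw [if_pos hB, if_pos fun w hw => hB w (hAB hw)]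
  · rw [if_neg hB]
    split_ifs
    exacts [hab, le_rfl]

theorem card_compl_mul_add_sum_eq_sum_ite {H : Type*} [Fintype H] [DecidableEq H]
    (s : Finset H) (c : ℝ) (m : H → ℝ) :
    (Finset.univ \ s).card * c + ∑ h ∈ s, m h = ∑ h, if h ∈ s then m h else c := by
  rw [Finset.sum_ite, Finset.sum_const, nsmul_eq_mul, add_comm, Finset.filter_mem_eq_inter, Finset.univ_inter, Finset.filter_not,
    Finset.filter_mem_eq_inter, Finset.univ_inter]

theorem mem_versionSpace {H Q R : Type*} [Fintype H] (q : Q → H → Finset R)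
    (S : Finset (Q × R)) (h : H) : h ∈ versionSpace q S ↔ ∀ p ∈ S, p.2 ∈ q p.1 h := by
  simp [versionSpace]

theorem approxLearning_submodular_monotone_general
    {H Q R X Y : Type*} [Fintype H] [Fintype X]
    (hyp : H → X → Y) (q : Q → H → Finset R)
    (κ : ℕ) (hκ : κ ≤ Fintype.card X) (h : H) :
    Submodular (fun S : Finset (Q × R) =>
        ((Finset.univ \ versionSpace q S).card * (Fintype.card X - κ) : ℝ) +
        ∑ h' ∈ versionSpace q S,
          min ((Fintype.card X - κ : ℕ) : ℝ)
            ((Finset.univ.filter (fun x : X => hyp h' x = hyp h x)).card : ℝ)) ∧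
    MonotoneSet (fun S : Finset (Q × R) =>
        ((Finset.univ \ versionSpace q S).card * (Fintype.card X - κ) : ℝ) +
        ∑ h' ∈ versionSpace q S,
          min ((Fintype.card X - κ : ℕ) : ℝ)
            ((Finset.univ.filter (fun x : X => hyp h' x = hyp h x)).card : ℝ)) := by
  set m : H → ℝ := fun h' =>
    min ((Fintype.card X - κ : ℕ) : ℝ) (Finset.univ.filter fun x => hyp h' x = hyp h x).card
  -- the cap is a truncated `ℕ` difference and the penalty a real one; `hκ` makes them agree
  have hm : ∀ h', m h' ≤ Fintype.card X - κ := fun h' =>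
    (min_le_left _ _).trans_eq (Nat.cast_sub hκ)
  have hF : (fun S : Finset (Q × R) =>
      ((Finset.univ \ versionSpace q S).card * (Fintype.card X - κ) : ℝ) +
        ∑ h' ∈ versionSpace q S, m h') =
      fun S => ∑ h', if ∀ p ∈ S, p.2 ∈ q p.1 h' then m h' else (Fintype.card X - κ : ℝ) := by
    funext S
    simp only [card_compl_mul_add_sum_eq_sum_ite, mem_versionSpace]
  rw [hF]
  exact ⟨Submodular.sum _ fun h' _ => submodular_ite_forall_mem _ (hm h'),
    MonotoneSet.sum _ fun h' _ => monotoneSet_ite_forall_mem _ (hm h')⟩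

theorem approxLearning_submodular_monotone
    {H Q R X Y : Type*} [Fintype H] [Fintype Q] [Fintype R] [Fintype X]
    (hyp : H → X → Y) (q : Q → H → Finset R)
    (hq : ∀ (qq : Q) (h' : H), (q qq h').Nonempty)
    (κ : ℕ) (hκ : κ ≤ Fintype.card X) (h : H) :
    Submodular (fun S : Finset (Q × R) =>
        ((Finset.univ \ versionSpace q S).card * (Fintype.card X - κ) : ℝ) +
        ∑ h' ∈ versionSpace q S,
          min ((Fintype.card X - κ : ℕ) : ℝ)
            ((Finset.univ.filter (fun x : X => hyp h' x = hyp h x)).card : ℝ)) ∧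
    MonotoneSet (fun S : Finset (Q × R) =>
        ((Finset.univ \ versionSpace q S).card * (Fintype.card X - κ) : ℝ) +
        ∑ h' ∈ versionSpace q S,
          min ((Fintype.card X - κ : ℕ) : ℝ)
            ((Finset.univ.filter (fun x : X => hyp h' x = hyp h x)).card : ℝ)) :=
  approxLearning_submodular_monotone_general hyp q κ hκ h
end

section
/- The combined objective F̄_α(Ŝ) = (1/|H|)·(Σ_{h ∈ V(Ŝ)} min(α, F_h(Ŝ)) + α·|H \ V(Ŝ)|) is submodular and monotone non-decreasing whenever each F_h is submodular and monotone non-decreasing and α ≥ 0. -/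
open scoped Classical

/-- The combined objective `F̄_α`. -/
noncomputable def Fbar {H Q R : Type*} [Fintype H]
    (q : Q → H → Finset R) (F : H → Finset (Q × R) → ℝ) (α : ℝ)
    (S : Finset (Q × R)) : ℝ :=
  (1 / (Fintype.card H : ℝ)) *
    ((∑ h ∈ versionSpace q S, min α (F h S)) +
      α * ((Finset.univ \ versionSpace q S).card : ℝ))

/-!
Write `F̄_α(S) = (1/|H|) ∑_h G_h(S)`, where `G_h(S)` is `min α (F_h S)` while `h` is consistent
with `S` and `α` once it is not. Truncating a monotone submodular function at a constant keeps
it monotone and submodular, and so does replacing it by the constant cap on the sets that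
contain an inconsistent element: adding a consistent element to an inconsistent set gains
nothing, and adding an inconsistent element jumps to the cap, which gains more from the smaller
set because the function is monotone. Nonnegative combinations then preserve both properties.
-/

namespace Submodular

variable {α ι : Type*} [DecidableEq α]

theorem sum_s9 {f : ι → Finset α → ℝ} (s : Finset ι) (hf : ∀ i ∈ s, Submodular (f i)) :
    Submodular (fun S => ∑ i ∈ s, f i S) := by
  intro A B hAB v hv
  simp only [← Finset.sum_sub_distrib]
  exact Finset.sum_le_sum fun i hi => hf i hi A B hAB v hv

theorem const_mul {F : Finset α → ℝ} (hF : Submodular F) {c : ℝ} (hc : 0 ≤ c) :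
    Submodular (fun S => c * F S) := by
  intro A B hAB v hv
  simp only [← mul_sub]
  exact mul_le_mul_of_nonneg_left (hF A B hAB v hv) hc

theorem min_const {F : Finset α → ℝ} (hF : Submodular F) (hmono : MonotoneSet F) (c : ℝ) :
    Submodular (fun S => min c (F S)) := by
  intro A B hAB v hv
  have hA := hmono A _ (Finset.subset_insert v A)
  have hB := hmono B _ (Finset.subset_insert v B)
  have hAB' := hmono _ _ (Finset.insert_subset_insert v hAB)
  have hsub := hF A B hAB v hv
  have hmin := min_le_min_left c hA
  simp only
  rcases le_total c (F B) with hcB | hBc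
  · rw [min_eq_left hcB, min_eq_left (hcB.trans hB)]
    linarith
  · rw [min_eq_right hBc, min_eq_right ((hmono A B hAB).trans hBc)]
    rcases le_total c (F (insert v B)) with hcB' | hB'c
    · rw [min_eq_left hcB']
      rcases le_total c (F (insert v A)) with hcA' | hA'c
      · rw [min_eq_left hcA']; linarith
      · rw [min_eq_right hA'c]; linarith
    · rw [min_eq_right hB'c, min_eq_right (hAB'.trans hB'c)]
      linarith

end Submodular

namespace MonotoneSet

variable {α ι : Type*}

theorem sum_s9 {f : ι → Finset α → ℝ} (s : Finset ι) (hf : ∀ i ∈ s, MonotoneSet (f i)) :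
    MonotoneSet (fun S => ∑ i ∈ s, f i S) :=
  fun A B hAB => Finset.sum_le_sum fun i hi => hf i hi A B hAB

theorem const_mul {F : Finset α → ℝ} (hF : MonotoneSet F) {c : ℝ} (hc : 0 ≤ c) :
    MonotoneSet (fun S => c * F S) :=
  fun A B hAB => mul_le_mul_of_nonneg_left (hF A B hAB) hc

theorem min_const {F : Finset α → ℝ} (hF : MonotoneSet F) (c : ℝ) :
    MonotoneSet (fun S => min c (F S)) :=
  fun A B hAB => min_le_min_left c (hF A B hAB)

end MonotoneSet

noncomputable def consistentOr {α : Type*} (ok : α → Prop) (F : Finset α → ℝ) (c : ℝ)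
    (S : Finset α) : ℝ :=
  if ∀ a ∈ S, ok a then F S else c

section consistentOr

variable {α : Type*} {ok : α → Prop} {F : Finset α → ℝ} {c : ℝ}

theorem MonotoneSet.consistentOr (hF : MonotoneSet F) (hFc : ∀ S, F S ≤ c) :
    MonotoneSet (consistentOr ok F c) := by
  intro A B hAB
  unfold _root_.consistentOr
  by_cases hB : ∀ a ∈ B, ok a
  · rw [if_pos fun a ha => hB a (hAB ha), if_pos hB]
    exact hF A B hAB
  · rw [if_neg hB]
    split_ifs
    exacts [hFc A, le_rfl]

theorem Submodular.consistentOr [DecidableEq α] (hF : Submodular F) (hmono : MonotoneSet F)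
    (hFc : ∀ S, F S ≤ c) : Submodular (consistentOr ok F c) := by
  intro A B hAB v hv
  by_cases hv_ok : ok v
  · have hins : ∀ S : Finset α, (∀ a ∈ insert v S, ok a) ↔ ∀ a ∈ S, ok a := by
      simp [hv_ok]
    unfold _root_.consistentOr
    simp only [hins]
    by_cases hB : ∀ a ∈ B, ok a
    · rw [if_pos fun a ha => hB a (hAB ha), if_pos fun a ha => hB a (hAB ha), if_pos hB,
        if_pos hB]
      exact hF A B hAB v hv
    · rw [if_neg hB, if_neg hB, sub_self]
      split_ifs
      exacts [sub_nonneg.mpr (hmono _ _ (Finset.subset_insert v A)), le_of_eq (sub_self c).symm]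
  · have hins : ∀ S : Finset α, _root_.consistentOr ok F c (insert v S) = c := fun S =>
      if_neg fun h => hv_ok (h v (Finset.mem_insert_self v S))
    rw [hins, hins]
    exact sub_le_sub_left ((hmono.consistentOr hFc) A B hAB) c

end consistentOr

theorem Fbar_eq_sum_consistentOr {H Q R : Type*} [Fintype H] (q : Q → H → Finset R)
    (F : H → Finset (Q × R) → ℝ) (α : ℝ) (S : Finset (Q × R)) :
    Fbar q F α S = (1 / (Fintype.card H : ℝ)) *
      ∑ h, consistentOr (fun p => p.2 ∈ q p.1 h) (fun S => min α (F h S)) α S := by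
  simp only [Fbar, versionSpace, consistentOr]
  rw [Finset.sum_ite, Finset.sum_const, nsmul_eq_mul, mul_comm α, Finset.sdiff_eq_filter]
  simp only [Finset.mem_filter, Finset.mem_univ, true_and]

theorem Fbar_submodular_monotone_general
    {H Q R : Type*} [Fintype H]
    (q : Q → H → Finset R)
    (F : H → Finset (Q × R) → ℝ)
    (hsub : ∀ h, Submodular (F h)) (hmono : ∀ h, MonotoneSet (F h))
    (α : ℝ) :
    Submodular (Fbar q F α) ∧ MonotoneSet (Fbar q F α) := by
  have hG_le (h : H) (S : Finset (Q × R)) : min α (F h S) ≤ α := min_le_left _ _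
  have hcard : (0 : ℝ) ≤ 1 / (Fintype.card H : ℝ) := by positivity
  have hFbar : Fbar q F α = fun S => (1 / (Fintype.card H : ℝ)) *
      ∑ h, consistentOr (fun p => p.2 ∈ q p.1 h) (fun S => min α (F h S)) α S :=
    funext (Fbar_eq_sum_consistentOr q F α)
  rw [hFbar]
  exact ⟨(Submodular.sum_s9 _ fun h _ => ((hsub h).min_const (hmono h) α).consistentOr
      ((hmono h).min_const α) (hG_le h)).const_mul hcard,
    (MonotoneSet.sum_s9 _ fun h _ => ((hmono h).min_const α).consistentOr (hG_le h)).const_mul hcard⟩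

theorem Fbar_submodular_monotone
    {H Q R : Type*} [Fintype H] [Fintype Q] [Fintype R] [Nonempty H]
    (q : Q → H → Finset R) (hq : ∀ (qq : Q) (h : H), (q qq h).Nonempty)
    (F : H → Finset (Q × R) → ℝ)
    (hsub : ∀ h, Submodular (F h)) (hmono : ∀ h, MonotoneSet (F h))
    (hzero : ∀ h, F h ∅ = 0) (α : ℝ) (hα : 0 ≤ α) :
    Submodular (Fbar q F α) ∧ MonotoneSet (Fbar q F α) :=
  Fbar_submodular_monotone_general q F hsub hmono α
end

section
/- The auxiliary function F̂_{α,h}(Ŝ) defined to equal min(α, F_h(Ŝ)) when h ∈ V(Ŝ) and α when h ∉ V(Ŝ) is submodular and monotone non-decreasing, for any fixed h ∈ H, whenever F_h is nonnegative, submodular, and monotone non-decreasing and α ≥ 0. -/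
/-!
Truncating a monotone submodular function at a level `α` keeps it monotone and submodular, and
leaving the version space only raises the value to its maximum `α`. Membership in the version
space is a conjunction of one condition per observation, so when an observation `v` is added to
`A ⊆ B`: either `h` stays in the version space of every set involved (plain submodularity), or
`h` has already left it at `B` (the left-hand increment is `0`), or `v` itself expels `h` (both
augmented sets have value `α`); the last two cases reduce to monotonicity.
-/

open scoped Classical

section Truncation

variable {α : Type*} {F : Finset α → ℝ}

theorem MonotoneSet.const_min (hmono : MonotoneSet F) (a : ℝ) :
    MonotoneSet (fun S => min a (F S)) :=
  fun A B hAB => min_le_min le_rfl (hmono A B hAB)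

theorem Submodular.const_min [DecidableEq α] (hsub : Submodular F) (hmono : MonotoneSet F)
    (a : ℝ) : Submodular (fun S => min a (F S)) := by
  intro A B hAB v hv
  have hAB' : F A ≤ F B := hmono A B hAB
  have hA : F A ≤ F (insert v A) := hmono _ _ (Finset.subset_insert v A)
  have hB : F B ≤ F (insert v B) := hmono _ _ (Finset.subset_insert v B)
  have hvAB : F (insert v A) ≤ F (insert v B) := hmono _ _ (Finset.insert_subset_insert v hAB)
  have := hsub A B hAB v hv
  simp only [min_def]
  split_ifs <;> linarith

end Truncation

section Restriction

variable {α : Type*} {F : Finset α → ℝ} {a : ℝ} (c : α → Prop) [DecidablePred c]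

theorem MonotoneSet.ite_forall_mem (hmono : MonotoneSet F) (hle : ∀ S, F S ≤ a) :
    MonotoneSet (fun S => if ∀ x ∈ S, c x then F S else a) := by
  intro A B hAB
  by_cases hB : ∀ x ∈ B, c x
  · have hA : ∀ x ∈ A, c x := fun x hx => hB x (hAB hx)
    simp only [if_pos hA, if_pos hB]
    exact hmono A B hAB
  · simp only [if_neg hB]
    split_ifs
    exacts [hle A, le_rfl]

theorem Submodular.ite_forall_mem [DecidableEq α] (hsub : Submodular F) (hmono : MonotoneSet F)
    (hle : ∀ S, F S ≤ a) :
    Submodular (fun S => if ∀ x ∈ S, c x then F S else a) := by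
  intro A B hAB v hv_notMem
  have hmonoG := hmono.ite_forall_mem c hle
  by_cases hv : c v
  · by_cases hB : ∀ x ∈ B, c x
    · have hA : ∀ x ∈ A, c x := fun x hx => hB x (hAB hx)
      have hvA : ∀ x ∈ insert v A, c x := Finset.forall_mem_insert _ _ _ |>.2 ⟨hv, hA⟩
      have hvB : ∀ x ∈ insert v B, c x := Finset.forall_mem_insert _ _ _ |>.2 ⟨hv, hB⟩
      simp only [if_pos hA, if_pos hB, if_pos hvA, if_pos hvB]
      exact hsub A B hAB v hv_notMem
    · -- `B` already violates `c`, so the left side is `a - a = 0`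
      have hvB : ¬∀ x ∈ insert v B, c x := fun h => hB (Finset.forall_mem_insert _ _ _ |>.1 h).2
      have := hmonoG A (insert v A) (Finset.subset_insert v A)
      simp only [if_neg hB, if_neg hvB]
      linarith
  · have hvA : ¬∀ x ∈ insert v A, c x := fun h => hv (h v (Finset.mem_insert_self v A))
    have hvB : ¬∀ x ∈ insert v B, c x := fun h => hv (h v (Finset.mem_insert_self v B))
    have := hmonoG A B hAB
    simp only [if_neg hvA, if_neg hvB]
    linarith

end Restriction

theorem Fhat_submodular_monotone_general
    {H Q R : Type*} [Fintype H]
    (q : Q → H → Finset R)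
    (h : H) (F : Finset (Q × R) → ℝ)
    (hsub : Submodular F) (hmono : MonotoneSet F)
    (α : ℝ) :
    Submodular (fun S : Finset (Q × R) =>
        if h ∈ versionSpace q S then min α (F S) else α) ∧
    MonotoneSet (fun S : Finset (Q × R) =>
        if h ∈ versionSpace q S then min α (F S) else α) := by
  have hle : ∀ S, min α (F S) ≤ α := fun S => min_le_left _ _
  have hfun : (fun S => if h ∈ versionSpace q S then min α (F S) else α) =
      fun S => if ∀ p ∈ S, p.2 ∈ q p.1 h then min α (F S) else α :=
    funext fun S => if_congr (mem_versionSpace q S h) rfl rfl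
  rw [hfun]
  exact ⟨(hsub.const_min hmono α).ite_forall_mem _ (hmono.const_min α) hle,
    (hmono.const_min α).ite_forall_mem _ hle⟩

theorem Fhat_submodular_monotone
    {H Q R : Type*} [Fintype H] [Fintype Q] [Fintype R]
    (q : Q → H → Finset R) (hq : ∀ (qq : Q) (h' : H), (q qq h').Nonempty)
    (h : H) (F : Finset (Q × R) → ℝ)
    (hnonneg : ∀ S, 0 ≤ F S) (hsub : Submodular F) (hmono : MonotoneSet F)
    (α : ℝ) (hα : 0 ≤ α) :
    Submodular (fun S : Finset (Q × R) =>
        if h ∈ versionSpace q S then min α (F S) else α) ∧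
    MonotoneSet (fun S : Finset (Q × R) =>
        if h ∈ versionSpace q S then min α (F S) else α) :=
  Fhat_submodular_monotone_general q h F hsub hmono α
end

section
/- Suppose F̄ is a monotone non-decreasing submodular function on finite subsets of Q × R, Ŝ is a set of question-response pairs with F̄(Ŝ) < α, and suppose for every question q ∈ Q there exists a response r(q) such that F̄(Ŝ ∪ {(q, r(q))}) - F̄(Ŝ) < c(q)·(α - F̄(Ŝ))/K, where c : Q → ℝ₊ and K > 0. Then for every finite sequence Q̂ of questions with total cost Σ_{q ∈ Q̂} c(q) ≤ K, we have F̄(Ŝ ∪ {(q, r(q)) : q ∈ Q̂}) < α. -/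
open Finset

theorem Submodular.apply_union_le_add_sum_sub {α : Type*} [DecidableEq α] {F : Finset α → ℝ}
    (hF : Submodular F) (S T : Finset α) :
    F (S ∪ T) ≤ F S + ∑ t ∈ T, (F (insert t S) - F S) := by
  induction T using Finset.induction_on with
  | empty => simp
  | insert a T ha ih =>
    rw [sum_insert ha, union_insert]
    by_cases haST : a ∈ S ∪ T
    · have haS : a ∈ S := (mem_union.1 haST).resolve_right ha
      rw [insert_eq_of_mem haST, insert_eq_of_mem haS]
      linarith
    · linarith [hF S (S ∪ T) subset_union_left a haST]

theorem no_cheap_cover_if_all_gains_small_general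
    {Q R : Type*} [DecidableEq Q] [DecidableEq R]
    (F : Finset (Q × R) → ℝ) (hsub : Submodular F)
    (c : Q → ℝ) (K : ℝ) (hK : 0 < K) (α : ℝ)
    (S : Finset (Q × R)) (hS : F S < α)
    (r : Q → R)
    (hgain : ∀ q : Q, F (insert (q, r q) S) - F S < c q * (α - F S) / K) :
    ∀ Qhat : Finset Q, (∑ q ∈ Qhat, c q) ≤ K →
      F (S ∪ Qhat.image (fun q => (q, r q))) < α := by
  intro Qhat hcost
  rcases Qhat.eq_empty_or_nonempty with rfl | hne
  · simpa using hS
  have hinj : Set.InjOn (fun q => (q, r q)) Qhat := fun _ _ _ _ h => congrArg Prod.fst h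
  calc F (S ∪ Qhat.image (fun q => (q, r q)))
      ≤ F S + ∑ t ∈ Qhat.image (fun q => (q, r q)), (F (insert t S) - F S) :=
        hsub.apply_union_le_add_sum_sub _ _
    _ = F S + ∑ q ∈ Qhat, (F (insert (q, r q) S) - F S) := by rw [sum_image hinj]
    _ < F S + ∑ q ∈ Qhat, c q * (α - F S) / K := by
        gcongr with q
        exact hgain q
    _ = F S + (∑ q ∈ Qhat, c q) * (α - F S) / K := by rw [sum_mul, sum_div]
    _ ≤ F S + K * (α - F S) / K := by gcongr
    _ = α := by rw [mul_div_cancel_left₀ _ hK.ne', add_sub_cancel]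

theorem no_cheap_cover_if_all_gains_small
    {Q R : Type*} [Fintype Q] [Fintype R] [DecidableEq Q] [DecidableEq R]
    (F : Finset (Q × R) → ℝ) (hsub : Submodular F) (hmono : MonotoneSet F)
    (c : Q → ℝ) (hc : ∀ q, 0 < c q) (K : ℝ) (hK : 0 < K) (α : ℝ)
    (S : Finset (Q × R)) (hS : F S < α)
    (r : Q → R)
    (hgain : ∀ q : Q, F (insert (q, r q) S) - F S < c q * (α - F S) / K) :
    ∀ Qhat : Finset Q, (∑ q ∈ Qhat, c q) ≤ K →
      F (S ∪ Qhat.image (fun q => (q, r q))) < α :=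
  no_cheap_cover_if_all_gains_small_general F hsub c K hK α S hS r hgain
end
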